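/- arXiv:1307.0766 — 4 statements merged into one kernel-verified Lean document; each statement's English description precedes it below -/
import Mathlib

section
/- Let F be a separable squarefree polynomial over a function field K over F_q, and suppose F divides a nonzero polynomial of the form x^{q^n} - s·x + t with s, t ∈ K, n ≥ 0. Then for any three distinct roots a₁, a₂, a₃ of F in an algebraic closure of K, the cross-ratio (a₁ - a₂)/(a₁ - a₃) lies in the algebraic closure of F_q. -/
open Polynomial

/-- Let `K` be a field of characteristic `p` containing `F_q` (`q` a power of `p`), and let
`F ∈ K[x]` be separable and squarefree, dividing a nonzero polynomial `x^{q^n} - s·x + t`.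
Then for any three distinct roots `a₁, a₂, a₃` of `F` in an algebraic closure of `K`, the
cross-ratio `(a₁ - a₂)/(a₁ - a₃)` is algebraic over the prime field, i.e. lies in the
algebraic closure of `F_q`. -/
theorem stmt_5 (Fq K : Type*) [Field Fq] [Fintype Fq] [Field K] [Algebra Fq K]
    (p : ℕ) [Fact p.Prime] [CharP K p] [Algebra (ZMod p) (AlgebraicClosure K)]
    (q e : ℕ) (hcard : Fintype.card Fq = q) (hq : q = p ^ e) (he : 1 ≤ e)
    (F : K[X]) (hFsep : F.Separable) (hFsf : Squarefree F)
    (n : ℕ) (s t : K)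
    (hG0 : (X ^ (q ^ n) - C s * X + C t : K[X]) ≠ 0)
    (hdvd : F ∣ (X ^ (q ^ n) - C s * X + C t))
    (a₁ a₂ a₃ : AlgebraicClosure K)
    (h₁ : aeval a₁ F = 0) (h₂ : aeval a₂ F = 0) (h₃ : aeval a₃ F = 0)
    (h12 : a₁ ≠ a₂) (h13 : a₁ ≠ a₃) (h23 : a₂ ≠ a₃) :
    IsAlgebraic (ZMod p) ((a₁ - a₂) / (a₁ - a₃)) := by
  haveI : CharP (AlgebraicClosure K) p :=
    charP_of_injective_algebraMap (algebraMap K (AlgebraicClosure K)).injective p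
  obtain ⟨H, hH⟩ := hdvd
  set s' : AlgebraicClosure K := algebraMap K (AlgebraicClosure K) s with hs'def
  set t' : AlgebraicClosure K := algebraMap K (AlgebraicClosure K) t with ht'def
  have hp2 : 2 ≤ p := (Fact.out : p.Prime).two_le
  have hq2 : 2 ≤ q := by
    calc 2 ≤ p := hp2
    _ = p ^ 1 := (pow_one p).symm
    _ ≤ p ^ e := Nat.pow_le_pow_right (by omega) he
    _ = q := hq.symm
  have key : ∀ a : AlgebraicClosure K, aeval a F = 0 → a ^ q ^ n - s' * a + t' = 0 := by
    intro a ha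
    have h := congrArg (aeval a) hH
    simp only [map_add, map_sub, map_mul, map_pow, aeval_X, aeval_C, ha, zero_mul] at h
    exact h
  have hqn : q ^ n = p ^ (e * n) := by rw [hq, ← pow_mul]
  have frob : ∀ x y : AlgebraicClosure K, (x - y) ^ q ^ n = x ^ q ^ n - y ^ q ^ n := by
    intro x y
    rw [hqn]
    exact sub_pow_char_pow x y _
  have k1 := key a₁ h₁
  have k2 := key a₂ h₂
  have k3 := key a₃ h₃
  have hb : (a₁ - a₂) ^ q ^ n = s' * (a₁ - a₂) := by
    rw [frob]; linear_combination k1 - k2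
  have hc : (a₁ - a₃) ^ q ^ n = s' * (a₁ - a₃) := by
    rw [frob]; linear_combination k1 - k3
  have hbne : a₁ - a₂ ≠ 0 := sub_ne_zero.mpr h12
  have hcne : a₁ - a₃ ≠ 0 := sub_ne_zero.mpr h13
  have hsne : s' ≠ 0 := by
    intro h0
    rw [h0, zero_mul] at hb
    exact hbne (pow_eq_zero_iff (by positivity) |>.mp hb)
  rcases Nat.eq_zero_or_pos n with hn | hn
  · -- n = 0 : derive a contradiction with hG0
    subst hn
    simp only [pow_zero, pow_one] at hb k1
    have hs1 : s' = 1 := by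
      have h' : s' * (a₁ - a₂) = 1 * (a₁ - a₂) := by rw [one_mul, ← hb]
      exact mul_right_cancel₀ hbne h'
    have hsK : s = 1 := (algebraMap K (AlgebraicClosure K)).injective
      (by rw [map_one]; exact hs1)
    have htK : t = 0 := by
      apply (algebraMap K (AlgebraicClosure K)).injective
      rw [map_zero, ← ht'def]
      rw [hs1, one_mul] at k1
      linear_combination k1
    exact absurd (by simp [hsK, htK]) hG0
  · have hr : ((a₁ - a₂) / (a₁ - a₃)) ^ q ^ n = (a₁ - a₂) / (a₁ - a₃) := by
      rw [div_pow, hb, hc, mul_div_mul_left _ _ hsne]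
    have hm2 : 2 ≤ q ^ n := le_trans hq2 (Nat.le_self_pow (by omega) q)
    refine ⟨X ^ q ^ n - X, ?_, ?_⟩
    · intro h
      have h' := congrArg (fun P : (ZMod p)[X] => P.coeff (q ^ n)) h
      simp only [coeff_sub, coeff_X_pow, if_pos rfl, coeff_X,
        if_neg (show ¬(1 = q ^ n) by omega), coeff_zero] at h'
      norm_num at h'
    · simp only [map_sub, map_pow, aeval_X, hr, sub_self]
end

section
/- Let K be a field of characteristic p containing F_q, and let F ∈ K[x] be monic with all roots of the form a_i = α·b_i + β, where b_i ∈ F_{q^ν} are distinct, and α ≠ 0, β lie in a Galois extension L of K. If the polynomial G(x) = ∏_{b ∈ F_{q^ν}}(x - α·b - β) does not have all its coefficients in K, then F divides G - G^σ for some σ ∈ Gal(L/K), and since G - G^σ is a polynomial of degree at most 1, F itself has degree at most 1. -/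
/-!
Over a finite field with `N` elements, `∏ c, (X - c) = X ^ N - X`. Scaling the roots by `α`,
translating them by `β` and using the Frobenius identity `(X - β) ^ N = X ^ N - β ^ N` gives
`G = X ^ N - α ^ (N - 1) X + (α ^ (N - 1) β - β ^ N)`, so `G - G^σ` is linear for every
automorphism `σ`. A coefficient of `G` outside `K` is moved by some `σ`, making `G - G^σ` nonzero;
`F` is fixed by `σ` and divides `G`, hence divides `G - G^σ`, and so has degree at most `1`.
-/

open Polynomial

lemma Fintype.prod_comp_dvd_prod_of_injective {ι κ M : Type*} [Fintype ι] [Fintype κ]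
    [CommMonoid M] (f : κ → M) {b : ι → κ} (hb : b.Injective) : ∏ i, f (b i) ∣ ∏ c, f c := by
  classical
  rw [← Finset.prod_image fun x _ y _ h => hb h]
  exact Finset.prod_dvd_prod_of_subset _ _ _ (Finset.subset_univ _)

namespace Polynomial

variable {R : Type*} [CommRing R]

lemma scaleRoots_prod [NoZeroDivisors R] {ι : Type*} (s : Finset ι) (f : ι → R[X]) (r : R) :
    (∏ i ∈ s, f i).scaleRoots r = ∏ i ∈ s, (f i).scaleRoots r :=
  map_prod (show R[X] →* R[X] from
    { toFun := (scaleRoots · r), map_one' := one_scaleRoots r,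
      map_mul' := fun p q => mul_scaleRoots_of_noZeroDivisors p q r }) f s

lemma scaleRoots_X_pow_sub_X {n : ℕ} (hn : 2 ≤ n) (r : R) :
    (X ^ n - X : R[X]).scaleRoots r = X ^ n - C (r ^ (n - 1)) * X := by
  nontriviality R
  have hdeg : (X ^ n - X : R[X]).natDegree = n := by
    rw [natDegree_sub_eq_left_of_natDegree_lt] <;> simp; omega
  ext i
  simp only [coeff_scaleRoots, hdeg, coeff_sub, coeff_X_pow, coeff_X, coeff_C_mul]
  rcases eq_or_ne i n with rfl | hin
  · simp [show 1 ≠ i by omega]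
  rcases eq_or_ne i 1 with rfl | hi1
  · simp [hin]
  simp [hin, Ne.symm hi1]

lemma natDegree_sub_map_le_one (f : R →+* R) (n : ℕ) (a d : R) :
    (X ^ n - C a * X + C d - (X ^ n - C a * X + C d).map f).natDegree ≤ 1 := by
  have hlinear : X ^ n - C a * X + C d - (X ^ n - C a * X + C d).map f =
      C (f a - a) * X + C (d - f d) := by
    simp only [Polynomial.map_add, Polynomial.map_sub, Polynomial.map_mul, Polynomial.map_pow,
      map_X, map_C, C_sub]
    ring
  rw [hlinear]
  exact natDegree_linear_le

end Polynomial

lemma FiniteField.prod_X_sub_C (F : Type*) [Field F] [Fintype F] :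
    ∏ c : F, (X - C c) = X ^ Fintype.card F - X := by
  have hmonic : (X ^ Fintype.card F - X : F[X]).Monic :=
    monic_X_pow_sub (by simpa using Fintype.one_lt_card)
  have hroots := roots_X_pow_card_sub_X F
  have hcard : Multiset.card (X ^ Fintype.card F - X : F[X]).roots =
      (X ^ Fintype.card F - X : F[X]).natDegree := by
    rw [hroots, X_pow_card_sub_X_natDegree_eq F Fintype.one_lt_card]
    rfl
  simpa [hroots] using prod_multiset_X_sub_C_of_monic_of_roots_card_eq hmonic hcard

namespace Subfield

variable {L : Type*} [Field L] (Fν : Subfield L) [Fintype Fν]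

lemma exists_charP_card_eq_pow : ∃ p n : ℕ, p.Prime ∧ CharP L p ∧ Fintype.card Fν = p ^ n := by
  obtain ⟨p, _, n, hp, hcard⟩ := FiniteField.card' Fν
  exact ⟨p, n, hp, charP_of_injective_algebraMap (algebraMap Fν L).injective p, hcard⟩

lemma prod_X_sub_C_mul (α : L) :
    ∏ c : Fν, (X - C (α * c)) = X ^ Fintype.card Fν - C (α ^ (Fintype.card Fν - 1)) * X := by
  have hFν : ∏ c : Fν, (X - C (c : L)) = X ^ Fintype.card Fν - X := by
    simpa [Polynomial.map_prod] using
      congrArg (Polynomial.map Fν.subtype) (FiniteField.prod_X_sub_C Fν)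
  rw [← scaleRoots_X_pow_sub_X Fintype.one_lt_card, ← hFν, scaleRoots_prod]
  simp [mul_comm]

lemma prod_X_sub_C_mul_add (α β : L) :
    ∏ c : Fν, (X - C (α * c + β)) = X ^ Fintype.card Fν - C (α ^ (Fintype.card Fν - 1)) * X
      + C (α ^ (Fintype.card Fν - 1) * β - β ^ Fintype.card Fν) := by
  obtain ⟨p, n, hp, _, hcard⟩ := Fν.exists_charP_card_eq_pow
  have := Fact.mk hp
  have hfrob : (X - C β : L[X]) ^ Fintype.card Fν =
      X ^ Fintype.card Fν - C β ^ Fintype.card Fν := by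
    rw [hcard, sub_pow_char_pow]
  calc ∏ c : Fν, (X - C (α * c + β))
      = (∏ c : Fν, (X - C (α * c))).comp (X - C β) := by
        simp only [prod_comp, sub_comp, X_comp, C_comp, C_add, sub_add_eq_sub_sub_swap]
    _ = _ := by
        rw [Fν.prod_X_sub_C_mul, sub_comp, mul_comp, pow_comp, X_comp, C_comp, hfrob]
        simp only [C_sub, C_mul, C_pow]
        ring

end Subfield

section Galois

variable {K L : Type*} [Field K] [Field L] [Algebra K L]

lemma exists_algEquiv_map_ne_of_not_forall_coeff_mem [IsGalois K L] {P : L[X]}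
    (h : ¬ ∀ i, P.coeff i ∈ (algebraMap K L).range) :
    ∃ σ : L ≃ₐ[K] L, P.map (σ : L →+* L) ≠ P := by
  contrapose! h
  exact fun i => (InfiniteGalois.mem_range_algebraMap_iff_fixed _).2 fun σ => by
    simpa using congrArg (coeff · i) (h σ)

lemma map_dvd_sub_map_algEquiv {F : K[X]} {P : L[X]} (h : F.map (algebraMap K L) ∣ P)
    (σ : L ≃ₐ[K] L) : F.map (algebraMap K L) ∣ P - P.map (σ : L →+* L) := by
  have hσK : (σ : L →+* L).comp (algebraMap K L) = algebraMap K L := σ.toAlgHom.comp_algebraMap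
  refine dvd_sub h ?_
  simpa [Polynomial.map_map, hσK] using Polynomial.map_dvd (σ : L →+* L) h

end Galois

theorem stmt_6_general (K L : Type*) [Field K] [Field L] [Algebra K L] [IsGalois K L]
    (Fν : Subfield L) [Fintype Fν]
    (α β : L)
    (F : K[X]) (m : ℕ) (b : Fin m → Fν) (hb : Function.Injective b)
    (hroots : F.map (algebraMap K L) = ∏ i : Fin m, (X - C (α * (b i : L) + β)))
    (hG : ¬ ∀ i : ℕ, (∏ c : Fν, (X - C (α * (c : L) + β))).coeff i ∈
      (algebraMap K L).range) :
    (∃ σ : L ≃ₐ[K] L,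
        (∏ c : Fν, (X - C (α * (c : L) + β))).map (σ : L →+* L) ≠
          ∏ c : Fν, (X - C (α * (c : L) + β)) ∧
        F.map (algebraMap K L) ∣
          (∏ c : Fν, (X - C (α * (c : L) + β)) -
            (∏ c : Fν, (X - C (α * (c : L) + β))).map (σ : L →+* L)) ∧
        (∏ c : Fν, (X - C (α * (c : L) + β)) -
            (∏ c : Fν, (X - C (α * (c : L) + β))).map (σ : L →+* L)).natDegree ≤ 1) ∧
      F.natDegree ≤ 1 := by
  set G := ∏ c : Fν, (X - C (α * (c : L) + β)) with hGdef
  obtain ⟨σ, hσ⟩ := exists_algEquiv_map_ne_of_not_forall_coeff_mem hG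
  have hFG : F.map (algebraMap K L) ∣ G :=
    hroots ▸ Fintype.prod_comp_dvd_prod_of_injective (fun c : Fν => X - C (α * c + β)) hb
  have hdvd := map_dvd_sub_map_algEquiv hFG σ
  have hdeg : (G - G.map (σ : L →+* L)).natDegree ≤ 1 := by
    rw [hGdef, Fν.prod_X_sub_C_mul_add]
    exact natDegree_sub_map_le_one _ _ _ _
  refine ⟨⟨σ, hσ, hdvd, hdeg⟩, ?_⟩
  calc F.natDegree = (F.map (algebraMap K L)).natDegree := (natDegree_map _).symm
    _ ≤ (G - G.map (σ : L →+* L)).natDegree := natDegree_le_of_dvd hdvd (sub_ne_zero.2 hσ.symm)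
    _ ≤ 1 := hdeg

/-- Let `K` be a field of characteristic `p` containing `F_q`, and `F ∈ K[x]` monic whose
roots (in a Galois extension `L` of `K`) are `a_i = α·b_i + β` with the `b_i` distinct
elements of a subfield `Fν` of `L` with `q^ν` elements, `α ≠ 0`.  Set
`G(x) = ∏_{b ∈ Fν} (x - α·b - β)`.  If not all coefficients of `G` lie in `K`, then for
some `σ ∈ Gal(L/K)` we have `G^σ ≠ G`, `F` divides `G - G^σ` (a polynomial of degree at
most `1`), and consequently `F` itself has degree at most `1`. -/
theorem stmt_6 (Fq K L : Type*) [Field Fq] [Fintype Fq] [Field K] [Algebra Fq K]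
    [Field L] [Algebra K L] [IsGalois K L]
    (p : ℕ) [Fact p.Prime] [CharP K p]
    (q e ν : ℕ) (hcard : Fintype.card Fq = q) (hq : q = p ^ e) (he : 1 ≤ e) (hν : 1 ≤ ν)
    (Fν : Subfield L) [Fintype Fν] (hFν : Fintype.card Fν = q ^ ν)
    (α β : L) (hα : α ≠ 0)
    (F : K[X]) (hF : F.Monic) (m : ℕ) (b : Fin m → Fν) (hb : Function.Injective b)
    (hroots : F.map (algebraMap K L) = ∏ i : Fin m, (X - C (α * (b i : L) + β)))
    (hG : ¬ ∀ i : ℕ, (∏ c : Fν, (X - C (α * (c : L) + β))).coeff i ∈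
      (algebraMap K L).range) :
    (∃ σ : L ≃ₐ[K] L,
        (∏ c : Fν, (X - C (α * (c : L) + β))).map (σ : L →+* L) ≠
          ∏ c : Fν, (X - C (α * (c : L) + β)) ∧
        F.map (algebraMap K L) ∣
          (∏ c : Fν, (X - C (α * (c : L) + β)) -
            (∏ c : Fν, (X - C (α * (c : L) + β))).map (σ : L →+* L)) ∧
        (∏ c : Fν, (X - C (α * (c : L) + β)) -
            (∏ c : Fν, (X - C (α * (c : L) + β))).map (σ : L →+* L)).natDegree ≤ 1) ∧
      F.natDegree ≤ 1 :=
  stmt_6_general K L Fν α β F m b hb hroots hG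
end

section
/- Let F ∈ K[x] be a separable polynomial over a function field K with roots a₁, ..., a_m in an algebraic closure, m ≥ 1. Suppose that for all triples of distinct indices i, j, k, the ratio (a_i - a_j)/(a_i - a_k) lies in the algebraic closure of F_q. Then there exist α ≠ 0, β algebraic over K, an integer ν ≥ 1, and elements b₁, ..., b_m ∈ F_{q^ν} such that a_i = α·b_i + β for all i. -/
/-!
Normalising by two distinct roots, `b i = (a i - a i₀) / (a i₁ - a i₀)` is itself one of the
assumed ratios (or `0`, `1`), so every `b i` is algebraic over `𝔽_p`. Finitely many such elements
generate a finite field `𝔽_{p^ν}`, whose elements are fixed by `x ↦ x ^ p ^ ν` and hence also by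
`x ↦ x ^ q ^ ν`; then `a i = (a i₁ - a i₀) * b i + a i₀`.
-/

open Function Polynomial

lemma pow_pow_eq_self_of_pow_eq_self {M : Type*} [Monoid M] {x : M} {k : ℕ} (h : x ^ k = x)
    (e : ℕ) : x ^ k ^ e = x := by
  have := (show IsFixedPt (· ^ k) x from h).iterate e
  rwa [pow_iterate] at this

theorem exists_pow_card_pow_eq_self_of_isAlgebraic {F Ω ι : Type*} [Field F] [Fintype F]
    [Field Ω] [Algebra F Ω] [Finite ι] {b : ι → Ω} (hb : ∀ i, IsAlgebraic F (b i)) :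
    ∃ n, 1 ≤ n ∧ ∀ i, b i ^ Fintype.card F ^ n = b i := by
  let L := IntermediateField.adjoin F (Set.range b)
  have : FiniteDimensional F L := IntermediateField.finiteDimensional_adjoin <| by
    rintro _ ⟨i, rfl⟩
    exact (hb i).isIntegral
  have : Finite L := Module.finite_of_finite F
  have : Fintype L := Fintype.ofFinite L
  refine ⟨Module.finrank F L, Module.finrank_pos, fun i => ?_⟩
  have hfix := FiniteField.pow_card
    (⟨b i, IntermediateField.subset_adjoin F _ ⟨i, rfl⟩⟩ : L)
  rw [Module.card_eq_pow_finrank (K := F)] at hfix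
  exact congrArg Subtype.val hfix

section Ratios

variable {R Ω ι : Type*} [CommRing R] [Nontrivial R] [Field Ω] [Algebra R Ω] {a : ι → Ω}

lemma isAlgebraic_div_sub_of_isAlgebraic_ratio
    (hratio : ∀ i j k, i ≠ j → i ≠ k → j ≠ k → IsAlgebraic R ((a i - a j) / (a i - a k)))
    {i₀ i₁ : ι} (h01 : i₀ ≠ i₁) (i : ι) :
    IsAlgebraic R ((a i - a i₀) / (a i₁ - a i₀)) := by
  by_cases h0 : i = i₀
  · simpa [h0] using isAlgebraic_zero
  by_cases h1 : i = i₁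
  · by_cases ha : a i₁ - a i₀ = 0
    · simpa [h1, ha] using isAlgebraic_zero
    · simpa [h1, div_self ha] using isAlgebraic_one
  rw [← neg_div_neg_eq, neg_sub, neg_sub]
  exact hratio i₀ i i₁ (Ne.symm h0) h01 h1

lemma exists_ne_zero_forall_isAlgebraic_div_sub
    (hratio : ∀ i j k, i ≠ j → i ≠ k → j ≠ k → IsAlgebraic R ((a i - a j) / (a i - a k)))
    (ha : Injective a) :
    ∃ α β : Ω, α ≠ 0 ∧ ∀ i, IsAlgebraic R ((a i - β) / α) := by
  rcases isEmpty_or_nonempty ι with hι | ⟨⟨i₀⟩⟩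
  · exact ⟨1, 0, one_ne_zero, isEmptyElim⟩
  by_cases h : ∃ i₁, i₁ ≠ i₀
  · obtain ⟨i₁, h10⟩ := h
    exact ⟨a i₁ - a i₀, a i₀, sub_ne_zero.2 (ha.ne h10),
      isAlgebraic_div_sub_of_isAlgebraic_ratio hratio h10.symm⟩
  · push Not at h
    exact ⟨1, a i₀, one_ne_zero, fun i => by simpa [h i] using isAlgebraic_zero⟩

end Ratios

theorem stmt_7_general (K : Type*) [Field K]
    (p : ℕ) [Fact p.Prime] [Algebra (ZMod p) (AlgebraicClosure K)]
    (q e : ℕ) (hq : q = p ^ e)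
    (m : ℕ) (a : Fin m → AlgebraicClosure K) (ha : Function.Injective a)
    (hratio : ∀ i j k : Fin m, i ≠ j → i ≠ k → j ≠ k →
      IsAlgebraic (ZMod p) ((a i - a j) / (a i - a k))) :
    ∃ (α β : AlgebraicClosure K), α ≠ 0 ∧
      ∃ ν : ℕ, 1 ≤ ν ∧ ∃ b : Fin m → AlgebraicClosure K,
        (∀ i, b i ^ q ^ ν = b i) ∧ ∀ i, a i = α * b i + β := by
  obtain ⟨α, β, hα, hb⟩ := exists_ne_zero_forall_isAlgebraic_div_sub hratio ha
  obtain ⟨ν, hν, hfix⟩ := exists_pow_card_pow_eq_self_of_isAlgebraic hb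
  rw [ZMod.card] at hfix
  refine ⟨α, β, hα, ν, hν, fun i => (a i - β) / α, fun i => ?_, fun i => ?_⟩
  · rw [hq, pow_right_comm]
    exact pow_pow_eq_self_of_pow_eq_self (hfix i) e
  · rw [mul_div_cancel₀ _ hα, sub_add_cancel]

/-- Let `K` be a field of characteristic `p` containing `F_q`, and `F ∈ K[x]` a separable
polynomial with (distinct) roots `a₁, …, a_m` (`m ≥ 1`) in an algebraic closure of `K`.
If for all triples of distinct indices `i, j, k` the ratio `(a_i - a_j)/(a_i - a_k)` is
algebraic over the prime field (i.e. lies in the algebraic closure of `F_q`), then there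
exist `α ≠ 0`, `β` (algebraic over `K`, being elements of the algebraic closure), `ν ≥ 1`,
and elements `b₁, …, b_m` of the subfield `F_{q^ν}` (characterized by `b^{q^ν} = b`) with
`a_i = α·b_i + β` for all `i`. -/
theorem stmt_7 (Fq K : Type*) [Field Fq] [Fintype Fq] [Field K] [Algebra Fq K]
    (p : ℕ) [Fact p.Prime] [CharP K p] [Algebra (ZMod p) (AlgebraicClosure K)]
    (q e : ℕ) (hcard : Fintype.card Fq = q) (hq : q = p ^ e) (he : 1 ≤ e)
    (F : K[X]) (hFsep : F.Separable)
    (m : ℕ) (hm : 1 ≤ m) (a : Fin m → AlgebraicClosure K) (ha : Function.Injective a)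
    (hroots : F.map (algebraMap K (AlgebraicClosure K)) =
      C (algebraMap K (AlgebraicClosure K) F.leadingCoeff) *
        ∏ i : Fin m, (X - C (a i)))
    (hratio : ∀ i j k : Fin m, i ≠ j → i ≠ k → j ≠ k →
      IsAlgebraic (ZMod p) ((a i - a j) / (a i - a k))) :
    ∃ (α β : AlgebraicClosure K), α ≠ 0 ∧
      ∃ ν : ℕ, 1 ≤ ν ∧ ∃ b : Fin m → AlgebraicClosure K,
        (∀ i, b i ^ q ^ ν = b i) ∧ ∀ i, a i = α * b i + β :=
  stmt_7_general K p q e hq m a ha hratio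
end

section
/- Let K be a function field over F_q, let F, H ∈ K[x] be nonzero polynomials, and let N be the maximum degree of any place appearing in the support of any coefficient of F or H. Then for any f ∈ K and any place Q of K with deg Q > N: if Q is in the support of the divisor of F(f), then Q is in the support of the divisor of F(f)·H(f), provided F(f)·H(f) ≠ 0. -/
open Polynomial

private lemma aux_sum_nonneg {K : Type*} [Field K] (ord : K → ℤ)
    (hadd : ∀ a b : K, a ≠ 0 → b ≠ 0 → a + b ≠ 0 → min (ord a) (ord b) ≤ ord (a + b))
    {ι : Type*} (s : Finset ι) (g : ι → K)
    (h : ∀ i ∈ s, g i ≠ 0 → 0 ≤ ord (g i)) (hs : ∑ i ∈ s, g i ≠ 0) :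
    0 ≤ ord (∑ i ∈ s, g i) := by
  induction s using Finset.cons_induction with
  | empty => simp at hs
  | cons a s ha ih =>
    rw [Finset.sum_cons] at hs ⊢
    by_cases h1 : g a = 0
    · rw [h1, zero_add] at hs ⊢
      exact ih (fun i hi => h i (Finset.mem_cons_of_mem hi)) hs
    by_cases h2 : (∑ i ∈ s, g i) = 0
    · rw [h2, add_zero] at hs ⊢
      exact h a (Finset.mem_cons_self a s) hs
    have h5 := hadd _ _ h1 h2 hs
    have h3 := ih (fun i hi => h i (Finset.mem_cons_of_mem hi)) h2
    have h4 := h a (Finset.mem_cons_self a s) h1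
    exact le_trans (le_min h4 h3) h5

private lemma aux_sum_distinct {K : Type*} [Field K] (ord : K → ℤ)
    (hadd_eq : ∀ a b : K, a ≠ 0 → b ≠ 0 → a + b ≠ 0 → ord a ≠ ord b →
      ord (a + b) = min (ord a) (ord b))
    (hneg : ∀ a : K, a ≠ 0 → ord (-a) = ord a)
    {ι : Type*} (s : Finset ι) (g : ι → K)
    (hg : ∀ i ∈ s, g i ≠ 0)
    (hdist : ∀ i ∈ s, ∀ j ∈ s, i ≠ j → ord (g i) ≠ ord (g j))
    (hs : s.Nonempty) :
    (∑ i ∈ s, g i) ≠ 0 ∧ ∃ i ∈ s, ord (∑ i ∈ s, g i) = ord (g i) := by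
  induction s using Finset.cons_induction with
  | empty => simp at hs
  | cons a s ha ih =>
    by_cases h2 : s.Nonempty
    · obtain ⟨hne, i, hi, hordi⟩ := ih (fun i hi => hg i (Finset.mem_cons_of_mem hi))
        (fun i hi j hj => hdist i (Finset.mem_cons_of_mem hi) j (Finset.mem_cons_of_mem hj)) h2
      have hga := hg a (Finset.mem_cons_self a s)
      have hda : ord (g a) ≠ ord (∑ i ∈ s, g i) := by
        rw [hordi]
        exact hdist a (Finset.mem_cons_self a s) i (Finset.mem_cons_of_mem hi)
          (by rintro rfl; exact ha hi)
      have hsum : g a + ∑ i ∈ s, g i ≠ 0 := by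
        intro h
        have h' : g a = -(∑ i ∈ s, g i) := eq_neg_of_add_eq_zero_left h
        rw [h', hneg _ hne] at hda
        exact hda rfl
      rw [Finset.sum_cons]
      refine ⟨hsum, ?_⟩
      rw [hadd_eq _ _ hga hne hsum hda]
      rcases min_cases (ord (g a)) (ord (∑ i ∈ s, g i)) with ⟨h, _⟩ | ⟨h, _⟩
      · exact ⟨a, Finset.mem_cons_self a s, h⟩
      · exact ⟨i, Finset.mem_cons_of_mem hi, by rw [h]; exact hordi⟩
    · rw [Finset.not_nonempty_iff_eq_empty] at h2
      subst h2
      simp only [Finset.sum_cons, Finset.sum_empty, add_zero]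
      exact ⟨hg a (Finset.mem_cons_self a _), a, Finset.mem_cons_self a _, rfl⟩

/-- Let `K` be a function field over `F_q` (places modelled by `Place` with degree and
valuation functions satisfying the standard axioms), let `F, H ∈ K[x]` be nonzero, and let
`N` bound the degree of every place in the support of any coefficient of `F` or `H`.  Then
for any `f ∈ K` and place `Q` with `deg Q > N`: if `Q` is in the support of `F(f)` and
`F(f)·H(f) ≠ 0`, then `Q` is in the support of `F(f)·H(f)` (no cancellation occurs). -/
theorem stmt_12 (Fq K : Type*) [Field Fq] [Fintype Fq] [Field K] [Algebra Fq K]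
    (p : ℕ) [Fact p.Prime] [CharP K p]
    (q e : ℕ) (hcard : Fintype.card Fq = q) (hq : q = p ^ e) (he : 1 ≤ e)
    -- the places of `K`, with their degrees and normalized valuations
    (Place : Type*) (degP : Place → ℕ) (hdeg : ∀ P, 0 < degP P)
    (ord : Place → K → ℤ)
    (hord_mul : ∀ P (a b : K), a ≠ 0 → b ≠ 0 → ord P (a * b) = ord P a + ord P b)
    (hord_add : ∀ P (a b : K), a ≠ 0 → b ≠ 0 → a + b ≠ 0 →
      min (ord P a) (ord P b) ≤ ord P (a + b))
    (hord_add_eq : ∀ P (a b : K), a ≠ 0 → b ≠ 0 → a + b ≠ 0 → ord P a ≠ ord P b →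
      ord P (a + b) = min (ord P a) (ord P b))
    (hconst : ∀ P (c : Fq), c ≠ 0 → ord P (algebraMap Fq K c) = 0)
    (hsupp : ∀ f : K, f ≠ 0 → {P | ord P f ≠ 0}.Finite)
    (F H : K[X]) (hF : F ≠ 0) (hH : H ≠ 0)
    -- `N` bounds the degrees of places in the supports of the coefficients of `F` and `H`
    (N : ℕ)
    (hN : ∀ i Q, (F.coeff i ≠ 0 → ord Q (F.coeff i) ≠ 0 → degP Q ≤ N) ∧
      (H.coeff i ≠ 0 → ord Q (H.coeff i) ≠ 0 → degP Q ≤ N)) :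
    ∀ (f : K) (Q : Place), N < degP Q → F.eval f * H.eval f ≠ 0 →
      ord Q (F.eval f) ≠ 0 → ord Q (F.eval f * H.eval f) ≠ 0 := by
  intro f Q hQ hne0 hFne
  have hF0 : F.eval f ≠ 0 := fun h => hne0 (by rw [h, zero_mul])
  have hH0 : H.eval f ≠ 0 := fun h => hne0 (by rw [h, mul_zero])
  have hcoeffF : ∀ i, F.coeff i ≠ 0 → ord Q (F.coeff i) = 0 := by
    intro i hi
    by_contra h
    exact absurd ((hN i Q).1 hi h) (by omega)
  have hcoeffH : ∀ i, H.coeff i ≠ 0 → ord Q (H.coeff i) = 0 := by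
    intro i hi
    by_contra h
    exact absurd ((hN i Q).2 hi h) (by omega)
  by_cases hf0 : f = 0
  · subst hf0
    rw [← Polynomial.coeff_zero_eq_eval_zero] at hF0 hFne
    exact absurd (hcoeffF 0 hF0) hFne
  -- ord of powers of f
  have hpow : ∀ n : ℕ, ord Q (f ^ n) = n * ord Q f := by
    intro n
    induction n with
    | zero =>
      have h1 : (f : K) ^ 0 = algebraMap Fq K 1 := by simp
      rw [h1, hconst Q 1 one_ne_zero]; simp
    | succ n ih =>
      rw [pow_succ, hord_mul Q _ f (pow_ne_zero n hf0) hf0, ih]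
      push_cast; ring
  have hneg : ∀ a : K, a ≠ 0 → ord Q (-a) = ord Q a := by
    intro a ha
    have h1 : (-a : K) = algebraMap Fq K (-1) * a := by simp
    rw [h1, hord_mul Q _ a (by simp) ha, hconst Q (-1) (by norm_num), zero_add]
  -- ord of each monomial term
  have hterm : ∀ (G : K[X]), (∀ i, G.coeff i ≠ 0 → ord Q (G.coeff i) = 0) →
      ∀ i ∈ G.support, ord Q (G.coeff i * f ^ i) = i * ord Q f := by
    intro G hG i hi
    rw [Polynomial.mem_support_iff] at hi
    rw [hord_mul Q _ _ hi (pow_ne_zero i hf0), hG i hi, hpow i, zero_add]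
  have heval : ∀ (G : K[X]), G.eval f = ∑ i ∈ G.support, G.coeff i * f ^ i := by
    intro G
    rw [Polynomial.eval_eq_sum, Polynomial.sum_def]
  rcases le_or_gt 0 (ord Q f) with hv | hv
  · -- nonnegative valuation case: both evals have ord ≥ 0
    have key : ∀ (G : K[X]), (∀ i, G.coeff i ≠ 0 → ord Q (G.coeff i) = 0) →
        G.eval f ≠ 0 → 0 ≤ ord Q (G.eval f) := by
      intro G hG hGe
      rw [heval G] at hGe ⊢
      refine aux_sum_nonneg (ord Q) (hord_add Q) _ _ ?_ hGe
      intro i hi _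
      rw [hterm G hG i hi]
      positivity
    have h1 := key F hcoeffF hF0
    have h2 := key H hcoeffH hH0
    rw [hord_mul Q _ _ hF0 hH0]
    omega
  · -- negative valuation case: both evals have ord ≤ 0
    have key : ∀ (G : K[X]), G ≠ 0 → (∀ i, G.coeff i ≠ 0 → ord Q (G.coeff i) = 0) →
        ord Q (G.eval f) ≤ 0 := by
      intro G hGne hG
      rw [heval G]
      obtain ⟨-, i, hi, hordi⟩ := aux_sum_distinct (ord Q) (hord_add_eq Q) hneg
        G.support (fun i => G.coeff i * f ^ i)
        (fun i hi => mul_ne_zero (Polynomial.mem_support_iff.mp hi) (pow_ne_zero i hf0))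
        (fun i hi j hj hij => by
          rw [hterm G hG i hi, hterm G hG j hj]
          intro h
          exact hij (Nat.cast_injective (mul_right_cancel₀ (by omega) h)))
        (Polynomial.support_nonempty.mpr hGne)
      rw [hordi, hterm G hG i hi]
      have : (0 : ℤ) ≤ i := Int.natCast_nonneg i
      nlinarith
    have h1 := key F hF hcoeffF
    have h2 := key H hH hcoeffH
    rw [hord_mul Q _ _ hF0 hH0]
    omega
end
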